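/- Let (r_ℓ)_{ℓ≥1} be a sequence of positive real numbers with r_ℓ → ∞ and r_ℓ/ℓ → 0 as ℓ → ∞. For integers ℓ ≥ 1 and m ≥ 0 with m ≤ ℓ and ℓ + m even, define c_{ℓ,m} := |m² − 1/2 − ℓ(ℓ+1)|^{1/4} · √((2ℓ+1)/(4π) · (ℓ−m)!/(ℓ+m)!) · (2^m/√π) · Γ((ℓ+m+1)/2)/Γ((ℓ−m+2)/2). Then there exist C > 0 and L ≥ 1 such that for all integers ℓ ≥ L and all integers m with ℓ + m even satisfying either ℓ − 2r_ℓ ≤ m ≤ ℓ − r_ℓ or r_ℓ ≤ m ≤ 2r_ℓ, one has C ℓ ≤ c_{ℓ,m}² ≤ C^{−1} ℓ. -/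

import Mathlib

open Real Filter

/-- The normalization constant in the WKB approximation of the associated Legendre
function (even parity case). -/
noncomputable def clm (ℓ m : ℕ) : ℝ :=
  |(m : ℝ) ^ 2 - 1 / 2 - (ℓ : ℝ) * ((ℓ : ℝ) + 1)| ^ ((1:ℝ) / 4) *
    Real.sqrt ((2 * (ℓ : ℝ) + 1) / (4 * π) *
      ((Nat.factorial (ℓ - m) : ℝ) / (Nat.factorial (ℓ + m) : ℝ))) *
    (2 ^ m / Real.sqrt π) *
    Real.Gamma (((ℓ : ℝ) + (m : ℝ) + 1) / 2) / Real.Gamma (((ℓ : ℝ) - (m : ℝ) + 2) / 2)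

/-!
Writing `ℓ = a + b` and `m = a - b`, the Gamma values and factorials in `clm ℓ m` collapse to
`clm ℓ m ^ 2 = √(4ab + ℓ + 1/2) · (2ℓ + 1)/(4π) · C(2a, a)/4^a · C(2b, b)/4^b`.
Since `√π ≤ stirlingSeq n ≤ stirlingSeq 1` for `n ≥ 1`, each `C(2n, n)/4^n`, which equals
`stirlingSeq (2n) / (stirlingSeq n ^ 2 · √n)`, is within constant factors of `1/√n`, while
`√(4ab + ℓ + 1/2)` lies between `2√(ab)` and `3√(ab)`. Hence `clm ℓ m ^ 2 ≍ ℓ` uniformly as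
soon as `b ≥ 1`, i.e. `m < ℓ`; both ranges of `m` in the theorem force `m < ℓ` once `r ℓ < ℓ / 2`.
-/

open Nat (factorial centralBinom)
open Stirling

lemma centralBinom_mul_factorial_sq (n : ℕ) :
    centralBinom n * factorial n ^ 2 = factorial (2 * n) := by
  have h := Nat.choose_mul_factorial_mul_factorial (show n ≤ 2 * n by omega)
  rwa [show 2 * n - n = n by omega, mul_assoc, ← sq, ← Nat.centralBinom_eq_two_mul_choose] at h

lemma centralBinom_div_four_pow_mul_sqrt {n : ℕ} (hn : n ≠ 0) :
    (centralBinom n : ℝ) / 4 ^ n * √n = stirlingSeq (2 * n) / stirlingSeq n ^ 2 := by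
  have hn0 : (0 : ℝ) < n := by positivity
  have hsqrt : √(2 * ((2 * n : ℕ) : ℝ)) = 2 * √n := by
    rw [show (2 : ℝ) * ((2 * n : ℕ) : ℝ) = 2 ^ 2 * n by push_cast; ring,
      Real.sqrt_mul (by positivity), Real.sqrt_sq zero_le_two]
  have hpow : (((2 * n : ℕ) : ℝ) / exp 1) ^ (2 * n) = 4 ^ n * ((n / exp 1) ^ n) ^ 2 := by
    rw [← pow_mul, mul_comm n 2, pow_mul, pow_mul, ← mul_pow]; push_cast; ring
  unfold stirlingSeq
  rw [hsqrt, hpow, ← centralBinom_mul_factorial_sq]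
  push_cast
  field_simp
  rw [Real.sq_sqrt (by positivity : (0 : ℝ) ≤ 2 * n), Real.sq_sqrt hn0.le]
  ring

lemma stirlingSeq_le_stirlingSeq_one {n : ℕ} (hn : n ≠ 0) : stirlingSeq n ≤ stirlingSeq 1 := by
  obtain ⟨k, rfl⟩ := Nat.exists_eq_succ_of_ne_zero hn
  exact stirlingSeq'_antitone (Nat.zero_le k)

lemma pi_le_stirlingSeq_sq {n : ℕ} (hn : n ≠ 0) : π ≤ stirlingSeq n ^ 2 := by
  rw [← Real.sq_sqrt pi_pos.le]
  exact pow_le_pow_left₀ (Real.sqrt_nonneg π) (sqrt_pi_le_stirlingSeq hn) 2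

lemma centralBinom_div_four_pow_mul_sqrt_mem {n : ℕ} (hn : n ≠ 0) :
    √π / stirlingSeq 1 ^ 2 ≤ (centralBinom n : ℝ) / 4 ^ n * √n ∧
      (centralBinom n : ℝ) / 4 ^ n * √n ≤ stirlingSeq 1 / π := by
  have h2n : 2 * n ≠ 0 := mul_ne_zero two_ne_zero hn
  have hs : 0 < √π := Real.sqrt_pos.mpr pi_pos
  have hlo := sqrt_pi_le_stirlingSeq hn
  rw [centralBinom_div_four_pow_mul_sqrt hn]
  constructor
  · exact div_le_div₀ (hs.le.trans (sqrt_pi_le_stirlingSeq h2n)) (sqrt_pi_le_stirlingSeq h2n)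
      (pow_pos (hs.trans_le hlo) 2)
      (pow_le_pow_left₀ (hs.le.trans hlo) (stirlingSeq_le_stirlingSeq_one hn) 2)
  · exact div_le_div₀ (stirlingSeq'_pos 0).le (stirlingSeq_le_stirlingSeq_one h2n) pi_pos
      (pi_le_stirlingSeq_sq hn)

lemma Gamma_natCast_add_half (n : ℕ) :
    Gamma (n + 1 / 2) = √π * factorial (2 * n) / (4 ^ n * factorial n) := by
  induction n with
  | zero => simp [← Gamma_one_half_eq]
  | succ n ih =>
    rw [Nat.cast_succ, add_right_comm, Gamma_add_one (by positivity), ih,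
      show 2 * (n + 1) = 2 * n + 1 + 1 by ring]
    simp only [Nat.factorial_succ, Nat.cast_mul, Nat.cast_succ, pow_succ]
    field_simp
    ring

lemma rpow_one_div_four_sq {x : ℝ} (hx : 0 ≤ x) : (x ^ (1 / 4 : ℝ)) ^ 2 = √x := by
  rw [← Real.rpow_natCast, ← Real.rpow_mul hx, Real.sqrt_eq_rpow]; norm_num

lemma clm_sq_eq {ℓ m a b : ℕ} (hl : ℓ = a + b) (hm : m + b = a) :
    clm ℓ m ^ 2 = √(4 * a * b + ℓ + 1 / 2) * ((2 * ℓ + 1) / (4 * π)) *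
      (centralBinom a / 4 ^ a) * (centralBinom b / 4 ^ b) := by
  have hmr : (m : ℝ) = a - b := by rw [← hm]; push_cast; ring
  have hlr : (ℓ : ℝ) = a + b := by rw [hl]; push_cast; ring
  have hX : 0 ≤ 4 * (a : ℝ) * b + ℓ + 1 / 2 := by positivity
  have habs : |(m : ℝ) ^ 2 - 1 / 2 - ℓ * (ℓ + 1)| = 4 * (a : ℝ) * b + ℓ + 1 / 2 := by
    rw [← abs_of_nonneg hX, ← abs_neg, hmr, hlr]; ring_nf
  have hGa : ((ℓ : ℝ) + m + 1) / 2 = a + 1 / 2 := by rw [hmr, hlr]; ring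
  have hGb : ((ℓ : ℝ) - m + 2) / 2 = b + 1 := by rw [hmr, hlr]; ring
  have h4 : ((2 : ℝ) ^ m) ^ 2 * 4 ^ b = 4 ^ a := by
    rw [← hm, pow_add, ← pow_mul, mul_comm m 2, pow_mul]; norm_num
  unfold clm
  rw [habs, hGa, hGb, show ℓ - m = 2 * b by omega, show ℓ + m = 2 * a by omega,
    Gamma_natCast_add_half, Gamma_nat_eq_factorial, ← centralBinom_mul_factorial_sq a,
    ← centralBinom_mul_factorial_sq b, div_pow, mul_pow, mul_pow, mul_pow,
    rpow_one_div_four_sq hX, Real.sq_sqrt (by positivity), div_pow, ← h4]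
  push_cast
  field_simp

lemma sqrt_div_sqrt_mul_sqrt_mem {a b : ℝ} (ha : 1 ≤ a) (hb : 1 ≤ b) :
    2 ≤ √(4 * a * b + (a + b) + 1 / 2) / (√a * √b) ∧
      √(4 * a * b + (a + b) + 1 / 2) / (√a * √b) ≤ 3 := by
  have hab : 0 < √a * √b := by positivity
  have hsq : (√a * √b) ^ 2 = a * b := by
    rw [mul_pow, Real.sq_sqrt (by positivity), Real.sq_sqrt (by positivity)]
  rw [le_div_iff₀ hab, div_le_iff₀ hab]
  constructor
  · rw [Real.le_sqrt (by positivity) (by positivity), mul_pow, hsq]; nlinarith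
  · rw [Real.sqrt_le_left (by positivity), mul_pow, hsq]; nlinarith

lemma clm_sq_mem_of_add {ℓ m a b : ℕ} (hl : ℓ = a + b) (hm : m + b = a) (hb0 : b ≠ 0) :
    ℓ / stirlingSeq 1 ^ 4 ≤ clm ℓ m ^ 2 ∧ clm ℓ m ^ 2 ≤ stirlingSeq 1 ^ 4 * ℓ := by
  have ha0 : a ≠ 0 := by omega
  have hlr : (ℓ : ℝ) = a + b := by rw [hl]; push_cast; ring
  have ha1 : (1 : ℝ) ≤ a := by exact_mod_cast Nat.one_le_iff_ne_zero.mpr ha0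
  have hb1 : (1 : ℝ) ≤ b := by exact_mod_cast Nat.one_le_iff_ne_zero.mpr hb0
  have key : clm ℓ m ^ 2 = √(4 * a * b + ℓ + 1 / 2) / (√a * √b) * ((2 * ℓ + 1) / (4 * π)) *
      (centralBinom a / 4 ^ a * √a) * (centralBinom b / 4 ^ b * √b) := by
    rw [clm_sq_eq hl hm]
    field_simp
  obtain ⟨hRlo, hRhi⟩ := sqrt_div_sqrt_mul_sqrt_mem ha1 hb1
  rw [← hlr] at hRlo hRhi
  obtain ⟨hAlo, hAhi⟩ := centralBinom_div_four_pow_mul_sqrt_mem ha0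
  obtain ⟨hBlo, hBhi⟩ := centralBinom_div_four_pow_mul_sqrt_mem hb0
  have hs := pi_le_stirlingSeq_sq one_ne_zero
  have hs1 : 0 ≤ stirlingSeq 1 := (stirlingSeq'_pos 0).le
  set s := stirlingSeq 1
  constructor
  · calc (ℓ : ℝ) / s ^ 4 ≤ 2 * ((2 * ℓ + 1) / (4 * π)) * (√π / s ^ 2) * (√π / s ^ 2) := by
          rw [show 2 * ((2 * ℓ + 1) / (4 * π)) * (√π / s ^ 2) * (√π / s ^ 2)
              = (ℓ + 1 / 2) / s ^ 4 by field_simp; rw [Real.sq_sqrt pi_pos.le]; ring]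
          gcongr
          linarith
      _ ≤ clm ℓ m ^ 2 := by
          rw [key]; gcongr
  · calc clm ℓ m ^ 2 ≤ 3 * ((2 * ℓ + 1) / (4 * π)) * (s / π) * (s / π) := by
          rw [key]; gcongr
      _ = 3 * (2 * ℓ + 1) * s ^ 2 / (4 * π ^ 3) := by field_simp
      _ ≤ s ^ 4 * ℓ := by
          rw [div_le_iff₀ (by positivity)]
          have hℓ : 3 * (2 * ℓ + 1) ≤ 9 * (ℓ : ℝ) := by linarith
          have hπ : 9 ≤ 4 * π ^ 3 * s ^ 2 :=
            calc (9 : ℝ) ≤ 4 * 3 ^ 3 * π := by linarith [pi_gt_three]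
              _ ≤ 4 * π ^ 3 * s ^ 2 := by gcongr; exact pi_gt_three.le
          nlinarith [mul_le_mul_of_nonneg_left hπ (by positivity : 0 ≤ s ^ 2 * ℓ)]

lemma clm_sq_mem {ℓ m : ℕ} (hm : m < ℓ) (h : Even (ℓ + m)) :
    ℓ / stirlingSeq 1 ^ 4 ≤ clm ℓ m ^ 2 ∧ clm ℓ m ^ 2 ≤ stirlingSeq 1 ^ 4 * ℓ := by
  obtain ⟨b, hb⟩ := (Nat.even_sub hm.le).mpr (Nat.even_add.mp h)
  exact clm_sq_mem_of_add (a := m + b) (by omega) rfl (by omega)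

theorem stmt_13_general (r : ℕ → ℝ) (hrpos : ∀ ℓ, 0 < r ℓ)
    (hr0 : Tendsto (fun ℓ : ℕ => r ℓ / (ℓ : ℝ)) atTop (nhds 0)) :
    ∃ C > (0:ℝ), ∃ L : ℕ, 1 ≤ L ∧ ∀ ℓ : ℕ, L ≤ ℓ → ∀ m : ℕ, m ≤ ℓ →
      Even (ℓ + m) →
      (((ℓ : ℝ) - 2 * r ℓ ≤ (m : ℝ) ∧ (m : ℝ) ≤ (ℓ : ℝ) - r ℓ) ∨
        (r ℓ ≤ (m : ℝ) ∧ (m : ℝ) ≤ 2 * r ℓ)) →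
      C * (ℓ : ℝ) ≤ clm ℓ m ^ 2 ∧ clm ℓ m ^ 2 ≤ C⁻¹ * (ℓ : ℝ) := by
  obtain ⟨L, hL⟩ := eventually_atTop.mp (hr0.eventually (gt_mem_nhds one_half_pos))
  refine ⟨(stirlingSeq 1 ^ 4)⁻¹, inv_pos.mpr (pow_pos (stirlingSeq'_pos 0) 4), max L 1,
    le_max_right L 1, fun ℓ hℓ m _ heven hreg => ?_⟩
  have hr : 2 * r ℓ < ℓ := by
    have := hL ℓ (le_of_max_le_left hℓ)
    rw [div_lt_iff₀ (by exact_mod_cast le_of_max_le_right hℓ)] at this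
    linarith
  have hm : m < ℓ := by
    have : (m : ℝ) < ℓ := by rcases hreg with ⟨-, h⟩ | ⟨-, h⟩ <;> linarith [hrpos ℓ]
    exact_mod_cast this
  rw [inv_inv, ← div_eq_inv_mul]
  exact clm_sq_mem hm heven

theorem stmt_13 (r : ℕ → ℝ) (hrpos : ∀ ℓ, 0 < r ℓ)
    (hrinf : Tendsto r atTop atTop)
    (hr0 : Tendsto (fun ℓ : ℕ => r ℓ / (ℓ : ℝ)) atTop (nhds 0)) :
    ∃ C > (0:ℝ), ∃ L : ℕ, 1 ≤ L ∧ ∀ ℓ : ℕ, L ≤ ℓ → ∀ m : ℕ, m ≤ ℓ →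
      Even (ℓ + m) →
      (((ℓ : ℝ) - 2 * r ℓ ≤ (m : ℝ) ∧ (m : ℝ) ≤ (ℓ : ℝ) - r ℓ) ∨
        (r ℓ ≤ (m : ℝ) ∧ (m : ℝ) ≤ 2 * r ℓ)) →
      C * (ℓ : ℝ) ≤ clm ℓ m ^ 2 ∧ clm ℓ m ^ 2 ≤ C⁻¹ * (ℓ : ℝ) :=
  stmt_13_general r hrpos hr0
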